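/- Let D = A + C = !![0,2;0,0] and let H = x·A + y·B + z·C. Then there exists M ∈ SL(2,ℝ) with M·D·M⁻¹ = H if and only if x² + y² − z² = 0 and z > 0. (The adjoint orbit of D is the upper half of the cone x² + y² − z² = 0 with the origin removed.) -/

import Mathlib

/-!
Conjugating the nilpotent `D = 2 e₁ e₂ᵀ` by `M = !![a, b; c, d]` of determinant one gives
`2 (a, c)ᵀ (-c, a)`, i.e. the point `(x, y, z) = (a² - c², -2ac, a² + c²)`: the real and imaginary
parts of `(a - ic)²` together with its modulus. Any nonzero first column extends to a matrix of
determinant one, and conversely, on the open upper cone a complex square root `a + ic` of `x - iy`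
has `a² + c² = |x - iy| = z`.
-/

noncomputable def A : Matrix (Fin 2) (Fin 2) ℝ := !![0, 1; 1, 0]
noncomputable def B : Matrix (Fin 2) (Fin 2) ℝ := !![1, 0; 0, -1]
noncomputable def C : Matrix (Fin 2) (Fin 2) ℝ := !![0, 1; -1, 0]
noncomputable def D : Matrix (Fin 2) (Fin 2) ℝ := A + C

open Matrix

theorem Matrix.of_fin_two_inj {α : Type*} {a b c d a' b' c' d' : α} :
    !![a, b; c, d] = !![a', b'; c', d'] ↔ a = a' ∧ b = b' ∧ c = c' ∧ d = d' := by
  simp [and_assoc]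

lemma D_eq : D = !![0, 2; 0, 0] := by
  ext i j
  fin_cases i <;> fin_cases j <;> norm_num [D, A, C]

lemma smul_A_add_smul_B_add_smul_C (x y z : ℝ) :
    x • A + y • B + z • C = !![y, x + z; x - z, -y] := by
  ext i j
  fin_cases i <;> fin_cases j <;> simp [A, B, C, sub_eq_add_neg]

lemma mul_D_mul_inv_of_det_eq_one {M : Matrix (Fin 2) (Fin 2) ℝ} (h : M.det = 1) :
    M * D * M⁻¹ =
      !![-(2 * M 0 0 * M 1 0), 2 * M 0 0 ^ 2; -(2 * M 1 0 ^ 2), 2 * M 0 0 * M 1 0] := by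
  obtain ⟨a, b, c, d, rfl⟩ : ∃ a b c d, M = !![a, b; c, d] := ⟨_, _, _, _, eta_fin_two M⟩
  rw [inv_def, h, Ring.inverse_one, one_smul, adjugate_fin_two_of, D_eq, mul_fin_two, mul_fin_two,
    of_fin_two_inj]
  simp only [of_apply, cons_val', cons_val_zero, cons_val_one, empty_val', cons_val_fin_one]
  refine ⟨?_, ?_, ?_, ?_⟩ <;> ring

lemma first_col_ne_zero_of_det_eq_one {R : Type*} [CommRing R] [Nontrivial R]
    {M : Matrix (Fin 2) (Fin 2) R} (h : M.det = 1) :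
    M 0 0 ≠ 0 ∨ M 1 0 ≠ 0 := by
  by_contra! hcol
  simp [det_fin_two, hcol.1, hcol.2] at h

lemma exists_det_eq_one_first_col {a c : ℝ} (h : a ≠ 0 ∨ c ≠ 0) :
    ∃ M : Matrix (Fin 2) (Fin 2) ℝ, M.det = 1 ∧ M 0 0 = a ∧ M 1 0 = c := by
  have hpos : 0 < a ^ 2 + c ^ 2 := by
    rcases h with h | h <;> positivity
  refine ⟨!![a, -c / (a ^ 2 + c ^ 2); c, a / (a ^ 2 + c ^ 2)], ?_, rfl, rfl⟩
  rw [det_fin_two_of]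
  field_simp
  ring

lemma exists_conj_D_eq_iff (x y z : ℝ) :
    (∃ M : Matrix (Fin 2) (Fin 2) ℝ, M.det = 1 ∧ M * D * M⁻¹ = !![y, x + z; x - z, -y]) ↔
      ∃ a c : ℝ, (a ≠ 0 ∨ c ≠ 0) ∧
        x = a ^ 2 - c ^ 2 ∧ y = -(2 * a * c) ∧ z = a ^ 2 + c ^ 2 := by
  have entries (a c : ℝ) :
      !![-(2 * a * c), 2 * a ^ 2; -(2 * c ^ 2), 2 * a * c] = !![y, x + z; x - z, -y] ↔
        x = a ^ 2 - c ^ 2 ∧ y = -(2 * a * c) ∧ z = a ^ 2 + c ^ 2 := by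
    rw [of_fin_two_inj]
    constructor
    · rintro ⟨h00, h01, h10, -⟩
      refine ⟨by linarith, by linarith, by linarith⟩
    · rintro ⟨rfl, rfl, rfl⟩
      refine ⟨rfl, by ring, by ring, by ring⟩
  constructor
  · rintro ⟨M, hdet, hM⟩
    rw [mul_D_mul_inv_of_det_eq_one hdet, entries] at hM
    exact ⟨M 0 0, M 1 0, first_col_ne_zero_of_det_eq_one hdet, hM⟩
  · rintro ⟨a, c, hac, hxyz⟩
    obtain ⟨M, hdet, rfl, rfl⟩ := exists_det_eq_one_first_col hac
    exact ⟨M, hdet, by rw [mul_D_mul_inv_of_det_eq_one hdet, entries]; exact hxyz⟩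

lemma upper_cone_iff_exists_sq (x y z : ℝ) :
    x ^ 2 + y ^ 2 - z ^ 2 = 0 ∧ 0 < z ↔
      ∃ a c : ℝ, (a ≠ 0 ∨ c ≠ 0) ∧
        x = a ^ 2 - c ^ 2 ∧ y = -(2 * a * c) ∧ z = a ^ 2 + c ^ 2 := by
  constructor
  · rintro ⟨hcone, hz⟩
    obtain ⟨w, hw⟩ := IsAlgClosed.exists_eq_mul_self (⟨x, -y⟩ : ℂ)
    have hx : x = w.re ^ 2 - w.im ^ 2 := by
      simpa [Complex.mul_re, sq] using congrArg Complex.re hw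
    have hy : y = -(2 * w.re * w.im) := by
      have := congrArg Complex.im hw
      simp only [Complex.mul_im] at this
      linarith
    -- `|w|² = |w²| = z` since both sides are nonnegative with equal squares.
    have hz' : z = w.re ^ 2 + w.im ^ 2 := by
      have hsq : z ^ 2 = (w.re ^ 2 + w.im ^ 2) ^ 2 := by rw [hx, hy] at hcone; linarith
      exact (pow_left_inj₀ hz.le (by positivity) two_ne_zero).1 hsq
    refine ⟨w.re, w.im, ?_, hx, hy, hz'⟩
    by_contra! h0
    exact hz.ne' (by simpa [h0.1, h0.2] using hz')
  · rintro ⟨a, c, hac, rfl, rfl, rfl⟩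
    refine ⟨by ring, ?_⟩
    rcases hac with h | h <;> positivity

/-- The adjoint orbit of `D = A + C = !![0,2;0,0]` under `SL(2,ℝ)` is the upper half
of the cone `x² + y² − z² = 0` (with the origin removed). -/
theorem adjoint_orbit_D_eq_upper_cone (x y z : ℝ) :
    (∃ M : Matrix (Fin 2) (Fin 2) ℝ, M.det = 1 ∧
        M * D * M⁻¹ = x • A + y • B + z • C) ↔
      x ^ 2 + y ^ 2 - z ^ 2 = 0 ∧ 0 < z := by
  rw [smul_A_add_smul_B_add_smul_C, exists_conj_D_eq_iff, upper_cone_iff_exists_sq]
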